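/- Let f be C² and 1-periodic with ‖f'‖ < ∞, g > 0, q ≥ 1 an integer, and suppose ‖f''‖ < ε_q where ε_q is small enough. Then for the q-th iterate of the bouncing-ball map in (t,y) variables one has ∂t_q/∂y = (2q/g)(1 + f̃_q(t,y)) with |f̃_q(t,y)| < 1/2 for all (t,y) with y > y^q, for some threshold y^q depending on q, ‖f'‖, ‖f''‖, g. In particular ∂t_q/∂y > q/g > 0, so the q-th iterate is a twist map on ℝ × (y^q, ∞). -/

import Mathlib

lemma habs2 (u v : ℝ) : |u - v| ≤ |u| + |v| := by
  calc |u - v| = |u + (-v)| := by ring_nf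
    _ ≤ |u| + |(-v)| := abs_add_le _ _
    _ = |u| + |v| := by rw [abs_neg]

lemma habs3 (u v w : ℝ) : |u + v - w| ≤ |u| + |v| + |w| := by
  calc |u + v - w| = |(u + v) + (-w)| := by ring_nf
    _ ≤ |u + v| + |(-w)| := abs_add_le _ _
    _ ≤ |u| + |v| + |w| := by rw [abs_neg]; linarith [abs_add_le u v]

lemma bb_core (q : ℕ) (C δ Gc ε : ℝ) (a b dS : ℕ → ℝ)
    (hC0 : 0 ≤ C) (hδ : 0 < δ) (hGc : 0 < Gc) (hε0 : 0 ≤ ε)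
    (h0a : a 0 = 0) (h0b : b 0 = 1)
    (hrec_a : ∀ n < q, a (n+1) = a n + 2*b n - 2*dS n)
    (hrec_b : ∀ n < q, |b (n+1) - b n + 2*dS n| ≤ ε*|a (n+1)|)
    (hdS : ∀ n < q, |dS n| * Gc ≤ C*(|a n| + |a (n+1)|))
    (hG1 : 8*C ≤ Gc)
    (hG2 : C*(6*(q:ℝ)+9) ≤ δ*Gc)
    (hεB : ε*(4*(q:ℝ)+8) ≤ δ)
    (hδq1 : (6*(q:ℝ)+2)*(q:ℝ)*δ ≤ 1)
    (hδq2 : 3*(q:ℝ)*δ ≤ 1) :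
    ∀ n ≤ q, |a n - 2*n| ≤ n*((6*(q:ℝ)+2)*δ) ∧ |b n - 1| ≤ n*(3*δ) := by
  intro n
  induction n with
  | zero => intro _; simp [h0a, h0b]
  | succ n ih =>
    intro hn1
    have hn : n < q := hn1
    obtain ⟨iha, ihb⟩ := ih hn.le
    have hnq : (n:ℝ) ≤ q := by exact_mod_cast hn.le
    have hn0 : (0:ℝ) ≤ n := by positivity
    have hα0 : 0 ≤ (6*(q:ℝ)+2)*δ := by positivity
    have hαmono : (n:ℝ)*((6*(q:ℝ)+2)*δ) ≤ (q:ℝ)*((6*(q:ℝ)+2)*δ) :=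
      mul_le_mul_of_nonneg_right hnq hα0
    have hβmono : (n:ℝ)*(3*δ) ≤ (q:ℝ)*(3*δ) :=
      mul_le_mul_of_nonneg_right hnq (by positivity)
    have han : |a n| ≤ 2*(q:ℝ)+1 := by
      have h1 : |a n| ≤ |a n - 2*(n:ℝ)| + |2*(n:ℝ)| := by
        have := abs_add_le (a n - 2*(n:ℝ)) (2*(n:ℝ)); simpa using this
      rw [abs_of_nonneg (by positivity : (0:ℝ) ≤ 2*(n:ℝ))] at h1
      nlinarith [hδq1]
    have hbn : |b n| ≤ 2 := by
      have h1 : |b n| ≤ |b n - 1| + |(1:ℝ)| := by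
        have := abs_add_le (b n - 1) 1; simpa using this
      simp only [abs_one] at h1
      linarith [hβmono, hδq2]
    have h2 : |a (n+1)| ≤ |a n| + 2*|b n| + 2*|dS n| := by
      rw [hrec_a n hn]
      calc |a n + 2*b n - 2*dS n| ≤ |a n| + |2*b n| + |2*dS n| := habs3 _ _ _
        _ = |a n| + 2*|b n| + 2*|dS n| := by rw [abs_mul, abs_mul]; norm_num
    have hdSn := hdS n hn
    have hdS0 : 0 ≤ |dS n| := abs_nonneg _
    have hx0 : 0 ≤ |a (n+1)| := abs_nonneg _
    have hp0 : 0 ≤ |a n| := abs_nonneg _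
    have hBx : |a (n+1)| ≤ 4*(q:ℝ)+8 := by
      nlinarith [mul_le_mul_of_nonneg_right h2 hGc.le,
        mul_nonneg (by linarith : (0:ℝ) ≤ Gc - 8*C) hx0,
        mul_nonneg (by linarith : (0:ℝ) ≤ Gc - 8*C) hp0,
        mul_le_mul_of_nonneg_right hbn hGc.le, hC0]
    have hdsδ : |dS n| ≤ δ := by
      nlinarith [mul_le_mul_of_nonneg_left
        (by linarith : |a n| + |a (n+1)| ≤ 6*(q:ℝ)+9) hC0]
    constructor
    · have hrw : a (n+1) - 2*((n:ℝ)+1) = (a n - 2*(n:ℝ)) + 2*(b n - 1) - 2*dS n := by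
        rw [hrec_a n hn]; ring
      have h3 : |a (n+1) - 2*((n:ℝ)+1)| ≤ |a n - 2*(n:ℝ)| + 2*|b n - 1| + 2*|dS n| := by
        rw [hrw]
        calc |(a n - 2*(n:ℝ)) + 2*(b n - 1) - 2*dS n|
            ≤ |a n - 2*(n:ℝ)| + |2*(b n - 1)| + |2*dS n| := habs3 _ _ _
          _ = |a n - 2*(n:ℝ)| + 2*|b n - 1| + 2*|dS n| := by
              rw [abs_mul, abs_mul]; norm_num
      push_cast
      have h6 : (n:ℝ)*(3*δ) ≤ (q:ℝ)*(3*δ) := hβmono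
      linarith [h3, iha, ihb, hdsδ, h6]
    · have hrw : b (n+1) - 1 = (b n - 1) + (b (n+1) - b n + 2*dS n) - 2*dS n := by ring
      have h3 : |b (n+1) - 1| ≤ |b n - 1| + |b (n+1) - b n + 2*dS n| + 2*|dS n| := by
        rw [hrw]
        calc |(b n - 1) + (b (n+1) - b n + 2*dS n) - 2*dS n|
            ≤ |b n - 1| + |b (n+1) - b n + 2*dS n| + |2*dS n| := habs3 _ _ _
          _ = _ := by rw [abs_mul]; norm_num
      have h4 := hrec_b n hn
      have h5 : ε*|a (n+1)| ≤ ε*(4*(q:ℝ)+8) := mul_le_mul_of_nonneg_left hBx hε0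
      push_cast
      linarith [h3, ihb, hdsδ, h4, h5, hεB]


set_option maxHeartbeats 1600000 in
/-- Twist of the q-th iterate of the bouncing ball map in (t,y) variables: if ‖f''‖
is smaller than some ε_q > 0, then there is a threshold y^q above which
∂t_q/∂y = (2q/g)(1 + f̃_q) with |f̃_q| < 1/2; in particular ∂t_q/∂y > q/g > 0, so the
q-th iterate is a twist map on ℝ × (y^q, ∞). Here T n t y and Y n t y denote the
coordinates of the n-th iterate of the map starting at (t,y). -/
theorem stmt_18 (g : ℝ) (hg : 0 < g) (q : ℕ) (hq : 1 ≤ q) (C : ℝ) :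
    ∃ ε > 0, ∀ f : ℝ → ℝ, ContDiff ℝ 2 f → Function.Periodic f 1 →
      (∀ x, |deriv f x| ≤ C) → (∀ x, |deriv (deriv f) x| < ε) →
      ∃ yq : ℝ, ∀ T Y : ℕ → ℝ → ℝ → ℝ,
        (∀ t y, yq < y →
          (T 0 t y = t ∧ Y 0 t y = y) ∧
          (∀ n < q, T n t y < T (n + 1) t y) ∧
          (∀ n < q, T (n + 1) t y = T n t y + 2 / g * Y n t y
            - 2 / g * ((f (T (n + 1) t y) - f (T n t y))
              / (T (n + 1) t y - T n t y))) ∧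
          (∀ n < q, Y (n + 1) t y = Y n t y
            - 2 * ((f (T (n + 1) t y) - f (T n t y)) / (T (n + 1) t y - T n t y))
            + 2 * deriv f (T (n + 1) t y)) ∧
          (∀ n ≤ q, DifferentiableAt ℝ (fun y' => T n t y') y)) →
        ∀ t y, yq < y →
          ∃ ftil : ℝ, deriv (fun y' => T q t y') y = 2 * q / g * (1 + ftil) ∧
            |ftil| < 1 / 2 ∧ deriv (fun y' => T q t y') y > q / g := by
  have hq1 : (1:ℝ) ≤ (q:ℝ) := by exact_mod_cast hq
  have hg' : g ≠ 0 := ne_of_gt hg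
  set δ : ℝ := 1/(100*((q:ℝ)+1)^2) with hδ_def
  have hδ : 0 < δ := by positivity
  refine ⟨g*δ/(100*((q:ℝ)+1)), by positivity, ?_⟩
  intro f hf2 hper hC hC2
  have hC0 : 0 ≤ C := le_trans (abs_nonneg _) (hC 0)
  have hfd : Differentiable ℝ f := hf2.differentiable (by norm_num)
  have hf'd : Differentiable ℝ (deriv f) := by
    have h2 : ContDiff ℝ (1+1) f := by norm_num; exact hf2
    exact (contDiff_succ_iff_deriv.mp h2).2.2.differentiable (by norm_num)
  have hfLip : ∀ u v : ℝ, |f v - f u| ≤ C*|v - u| := by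
    intro u v
    have := Convex.norm_image_sub_le_of_norm_deriv_le (s := Set.univ) (f := f)
      (fun x _ => hfd x) (fun x _ => by simpa [Real.norm_eq_abs] using hC x)
      convex_univ (Set.mem_univ u) (Set.mem_univ v)
    simpa [Real.norm_eq_abs] using this
  set G : ℝ := 16*C/g + (2*C/g)*(6*(q:ℝ)+9)/δ + 1 with hG_def
  have hG0 : 0 < G := by positivity
  refine ⟨(4*(q:ℝ)+1)*C + (g/2)*G, ?_⟩
  intro T Y hTY t y hy
  obtain ⟨⟨hT0, hY0⟩, hmono, hTrec, hYrec, hTd⟩ := hTY t y hy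
  have hmem : Set.Ioi ((4*(q:ℝ)+1)*C + (g/2)*G) ∈ nhds y := Ioi_mem_nhds hy
  -- gap positivity and lower bound at y
  have hgap : ∀ n < q, 0 < T (n+1) t y - T n t y := fun n hn => sub_pos.2 (hmono n hn)
  -- |S n| ≤ C at y
  have hSb : ∀ n < q, |(f (T (n+1) t y) - f (T n t y)) / (T (n+1) t y - T n t y)| ≤ C := by
    intro n hn
    rw [abs_div]
    rw [div_le_iff₀ (by simpa using abs_pos.2 (ne_of_gt (hgap n hn)))]
    calc |f (T (n+1) t y) - f (T n t y)| ≤ C * |T (n+1) t y - T n t y| := hfLip _ _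
      _ = C * |T (n+1) t y - T n t y| := rfl
  -- |Y n - y| ≤ 4 n C
  have hYb : ∀ n ≤ q, |Y n t y - y| ≤ 4*(n:ℝ)*C := by
    intro n
    induction n with
    | zero => intro _; simp [hY0]
    | succ n ih =>
      intro hn1
      have hn : n < q := hn1
      have ihn := ih hn.le
      have h1 : Y (n+1) t y - Y n t y
          = - 2 * ((f (T (n+1) t y) - f (T n t y)) / (T (n+1) t y - T n t y))
            + 2 * deriv f (T (n+1) t y) := by rw [hYrec n hn]; ring
      have h2 : |Y (n+1) t y - Y n t y| ≤ 4*C := by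
        rw [h1]
        calc |(-2) * ((f (T (n+1) t y) - f (T n t y)) / (T (n+1) t y - T n t y))
              + 2 * deriv f (T (n+1) t y)|
            ≤ |(-2) * ((f (T (n+1) t y) - f (T n t y)) / (T (n+1) t y - T n t y))|
              + |2 * deriv f (T (n+1) t y)| := abs_add_le _ _
          _ ≤ 2*C + 2*C := by
              rw [abs_mul, abs_mul]
              norm_num
              linarith [hSb n hn, hC (T (n+1) t y)]
          _ = 4*C := by ring
      have h3 : |Y (n+1) t y - y| ≤ |Y n t y - y| + |Y (n+1) t y - Y n t y| := by
        have := abs_add_le (Y n t y - y) (Y (n+1) t y - Y n t y)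
        simpa using this
      push_cast
      linarith
  -- gap ≥ G
  have hgapG : ∀ n < q, G ≤ T (n+1) t y - T n t y := by
    intro n hn
    have h1 : T (n+1) t y - T n t y
        = 2/g*(Y n t y - (f (T (n+1) t y) - f (T n t y)) / (T (n+1) t y - T n t y)) := by
      linear_combination hTrec n hn
    have hnq : (n:ℝ) ≤ (q:ℝ) := by exact_mod_cast hn.le
    have h2 : Y n t y - (f (T (n+1) t y) - f (T n t y)) / (T (n+1) t y - T n t y)
        ≥ (g/2)*G := by
      have hY := hYb n hn.le
      have hS := hSb n hn
      have h3 : Y n t y ≥ y - 4*(n:ℝ)*C := by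
        have := abs_le.1 hY; linarith [this.1]
      have h4 : (f (T (n+1) t y) - f (T n t y)) / (T (n+1) t y - T n t y) ≤ C :=
        (abs_le.1 hS).2
      nlinarith [mul_nonneg (sub_nonneg.2 hnq) hC0]
    rw [h1]
    calc G = 2/g*((g/2)*G) := by field_simp
      _ ≤ _ := by
          apply mul_le_mul_of_nonneg_left h2 (by positivity)
  -- derivative machinery
  have hT' : ∀ n ≤ q, HasDerivAt (fun y' => T n t y') (deriv (fun y' => T n t y') y) y :=
    fun n hn => (hTd n hn).hasDerivAt
  have hcompf : ∀ n ≤ q, HasDerivAt (fun y' => f (T n t y'))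
      (deriv f (T n t y) * deriv (fun y' => T n t y') y) y := by
    intro n hn
    exact (hfd (T n t y)).hasDerivAt.comp y (hT' n hn)
  have hcompf' : ∀ n ≤ q, HasDerivAt (fun y' => deriv f (T n t y'))
      (deriv (deriv f) (T n t y) * deriv (fun y' => T n t y') y) y := by
    intro n hn
    exact (hf'd (T n t y)).hasDerivAt.comp y (hT' n hn)
  have hSder : ∀ n < q, HasDerivAt
      (fun y' => (f (T (n+1) t y') - f (T n t y')) / (T (n+1) t y' - T n t y'))
      (((deriv f (T (n+1) t y) * deriv (fun y' => T (n+1) t y') y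
          - deriv f (T n t y) * deriv (fun y' => T n t y') y) * (T (n+1) t y - T n t y)
        - (f (T (n+1) t y) - f (T n t y))
          * (deriv (fun y' => T (n+1) t y') y - deriv (fun y' => T n t y') y))
        / (T (n+1) t y - T n t y)^2) y := by
    intro n hn
    have hN := (hcompf (n+1) hn).sub (hcompf n hn.le)
    have hD := (hT' (n+1) hn).sub (hT' n hn.le)
    exact hN.div hD (ne_of_gt (hgap n hn))
  have hYd : ∀ n, n ≤ q → DifferentiableAt ℝ (fun y' => Y n t y') y := by
    intro n
    induction n with
    | zero =>
      intro _
      have hev : (fun y' => Y 0 t y') =ᶠ[nhds y] (fun y' => y') :=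
        Filter.eventuallyEq_of_mem hmem (fun y' h => (hTY t y' h).1.2)
      exact hev.differentiableAt_iff.mpr differentiableAt_id
    | succ n ih =>
      intro hn1
      have hn : n < q := hn1
      have hev : (fun y' => Y (n+1) t y') =ᶠ[nhds y]
          (fun y' => Y n t y'
            - 2 * ((f (T (n+1) t y') - f (T n t y')) / (T (n+1) t y' - T n t y'))
            + 2 * deriv f (T (n+1) t y')) :=
        Filter.eventuallyEq_of_mem hmem (fun y' h => (hTY t y' h).2.2.2.1 n hn)
      exact hev.differentiableAt_iff.mpr
        (((ih hn.le).sub ((hSder n hn).differentiableAt.const_mul 2)).add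
          ((hcompf' (n+1) hn).differentiableAt.const_mul 2))
  have hareq : ∀ n < q, deriv (fun y' => T (n+1) t y') y
      = deriv (fun y' => T n t y') y + 2/g * deriv (fun y' => Y n t y') y
        - 2/g * deriv (fun y' =>
            (f (T (n+1) t y') - f (T n t y')) / (T (n+1) t y' - T n t y')) y := by
    intro n hn
    have hev : (fun y' => T (n+1) t y') =ᶠ[nhds y]
        (fun y' => T n t y' + 2/g * Y n t y'
          - 2/g * ((f (T (n+1) t y') - f (T n t y')) / (T (n+1) t y' - T n t y'))) :=
      Filter.eventuallyEq_of_mem hmem (fun y' h => (hTY t y' h).2.2.1 n hn)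
    have h1 : HasDerivAt (fun y' => T n t y' + 2/g * Y n t y'
        - 2/g * ((f (T (n+1) t y') - f (T n t y')) / (T (n+1) t y' - T n t y')))
        (deriv (fun y' => T n t y') y + 2/g * deriv (fun y' => Y n t y') y
          - 2/g * deriv (fun y' =>
              (f (T (n+1) t y') - f (T n t y')) / (T (n+1) t y' - T n t y')) y) y :=
      ((hT' n hn.le).add ((hYd n hn.le).hasDerivAt.const_mul (2/g))).sub
        (((hSder n hn).differentiableAt.hasDerivAt).const_mul (2/g))
    rw [hev.deriv_eq, h1.deriv]
  have hbreq : ∀ n < q, deriv (fun y' => Y (n+1) t y') y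
      = deriv (fun y' => Y n t y') y
        - 2 * deriv (fun y' =>
            (f (T (n+1) t y') - f (T n t y')) / (T (n+1) t y' - T n t y')) y
        + 2 * (deriv (deriv f) (T (n+1) t y) * deriv (fun y' => T (n+1) t y') y) := by
    intro n hn
    have hev : (fun y' => Y (n+1) t y') =ᶠ[nhds y]
        (fun y' => Y n t y'
          - 2 * ((f (T (n+1) t y') - f (T n t y')) / (T (n+1) t y' - T n t y'))
          + 2 * deriv f (T (n+1) t y')) :=
      Filter.eventuallyEq_of_mem hmem (fun y' h => (hTY t y' h).2.2.2.1 n hn)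
    have h1 : HasDerivAt (fun y' => Y n t y'
        - 2 * ((f (T (n+1) t y') - f (T n t y')) / (T (n+1) t y' - T n t y'))
        + 2 * deriv f (T (n+1) t y'))
        (deriv (fun y' => Y n t y') y
          - 2 * deriv (fun y' =>
              (f (T (n+1) t y') - f (T n t y')) / (T (n+1) t y' - T n t y')) y
          + 2 * (deriv (deriv f) (T (n+1) t y) * deriv (fun y' => T (n+1) t y') y)) y :=
      (((hYd n hn.le).hasDerivAt).sub
        (((hSder n hn).differentiableAt.hasDerivAt).const_mul 2)).add
        ((hcompf' (n+1) hn).const_mul 2)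
    rw [hev.deriv_eq, h1.deriv]
  have ha0 : deriv (fun y' => T 0 t y') y = 0 := by
    have hev : (fun y' => T 0 t y') =ᶠ[nhds y] (fun _ => t) :=
      Filter.eventuallyEq_of_mem hmem (fun y' h => (hTY t y' h).1.1)
    rw [hev.deriv_eq]; simp
  have hb0 : deriv (fun y' => Y 0 t y') y = 1 := by
    have hev : (fun y' => Y 0 t y') =ᶠ[nhds y] (fun y' => y') :=
      Filter.eventuallyEq_of_mem hmem (fun y' h => (hTY t y' h).1.2)
    rw [hev.deriv_eq]; simp
  have hdSb : ∀ n < q, |deriv (fun y' =>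
      (f (T (n+1) t y') - f (T n t y')) / (T (n+1) t y' - T n t y')) y| * G
      ≤ (2*C/g) * (|g * deriv (fun y' => T n t y') y|
        + |g * deriv (fun y' => T (n+1) t y') y|) := by
    intro n hn
    have hD := hgap n hn
    have hDG := hgapG n hn
    rw [(hSder n hn).deriv]
    set d1 := deriv (fun y' => T n t y') y with hd1
    set d2 := deriv (fun y' => T (n+1) t y') y with hd2
    set D := T (n+1) t y - T n t y with hDdef
    set N := f (T (n+1) t y) - f (T n t y) with hNdef
    set p1 := deriv f (T n t y) with hp1
    set p2 := deriv f (T (n+1) t y) with hp2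
    clear_value d1 d2 D N p1 p2
    have hRHS : (2*C/g) * (|g * d1| + |g * d2|) = 2*C*(|d1| + |d2|) := by
      rw [abs_mul, abs_mul, abs_of_pos hg]; field_simp
    rw [hRHS, abs_div, abs_of_nonneg (sq_nonneg D), div_mul_eq_mul_div,
      div_le_iff₀ (by positivity)]
    have h1 : |N| ≤ C * D := by
      have h := hfLip (T n t y) (T (n+1) t y)
      rw [← hNdef, ← hDdef, abs_of_pos hD] at h
      exact h
    have ha := hC (T (n+1) t y)
    have hb := hC (T n t y)
    rw [← hp2] at ha
    rw [← hp1] at hb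
    have h3 := abs_nonneg d1
    have h4 := abs_nonneg d2
    have h2 : |p2 * d2 - p1 * d1| ≤ C * (|d1| + |d2|) := by
      calc |p2 * d2 - p1 * d1| ≤ |p2 * d2| + |p1 * d1| := habs2 _ _
        _ ≤ C * (|d1| + |d2|) := by rw [abs_mul, abs_mul]; nlinarith
    have h5 : |d2 - d1| ≤ |d1| + |d2| := by
      have := habs2 d2 d1; linarith
    have hnum : |(p2 * d2 - p1 * d1) * D - N * (d2 - d1)| ≤ 2*C*(|d1| + |d2|)*D := by
      have t1 := habs2 ((p2 * d2 - p1 * d1) * D) (N * (d2 - d1))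
      rw [abs_mul, abs_mul, abs_of_pos hD] at t1
      have h6 := abs_nonneg (d2 - d1)
      have f1 := mul_le_mul_of_nonneg_right h2 hD.le
      have f2 := mul_le_mul h1 h5 h6 (by positivity : (0:ℝ) ≤ C * D)
      linarith only [t1, f1, f2]
    have hs0 : (0:ℝ) ≤ 2*C*(|d1| + |d2|) := by positivity
    have r1 := mul_le_mul_of_nonneg_right hnum hG0.le
    have r2 := mul_le_mul_of_nonneg_left hDG (mul_nonneg hs0 hD.le)
    have hexp : 2*C*(|d1| + |d2|) * D^2 = 2*C*(|d1| + |d2|)*D*D := by ring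
    rw [hexp]
    linarith only [r1, r2]
  -- numeric conditions + core application
  have hqR0 : (0:ℝ) < (q:ℝ) := by linarith
  have hqne : (q:ℝ) ≠ 0 := ne_of_gt hqR0
  have hcore :=
    bb_core q (2*C/g) δ G (2*(g*δ/(100*((q:ℝ)+1)))/g)
      (fun n => g * deriv (fun y' => T n t y') y)
      (fun n => deriv (fun y' => Y n t y') y)
      (fun n => deriv (fun y' =>
        (f (T (n+1) t y') - f (T n t y')) / (T (n+1) t y' - T n t y')) y)
      (by positivity) hδ hG0 (by positivity)
      (by show g * deriv (fun y' => T 0 t y') y = 0; rw [ha0]; ring) hb0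
      (by
        intro n hn
        show g * deriv (fun y' => T (n+1) t y') y
          = g * deriv (fun y' => T n t y') y + 2 * deriv (fun y' => Y n t y') y
            - 2 * deriv (fun y' =>
              (f (T (n+1) t y') - f (T n t y')) / (T (n+1) t y' - T n t y')) y
        rw [hareq n hn]; field_simp)
      (by
        intro n hn
        show |deriv (fun y' => Y (n+1) t y') y - deriv (fun y' => Y n t y') y
            + 2 * deriv (fun y' =>
              (f (T (n+1) t y') - f (T n t y')) / (T (n+1) t y' - T n t y')) y|
          ≤ 2*(g*δ/(100*((q:ℝ)+1)))/g * |g * deriv (fun y' => T (n+1) t y') y|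
        have hrw : deriv (fun y' => Y (n+1) t y') y - deriv (fun y' => Y n t y') y
            + 2 * deriv (fun y' =>
              (f (T (n+1) t y') - f (T n t y')) / (T (n+1) t y' - T n t y')) y
            = 2 * (deriv (deriv f) (T (n+1) t y) * deriv (fun y' => T (n+1) t y') y) := by
          rw [hbreq n hn]; ring
        rw [hrw]
        have h1 := (hC2 (T (n+1) t y)).le
        calc |2 * (deriv (deriv f) (T (n+1) t y) * deriv (fun y' => T (n+1) t y') y)|
            = 2 * (|deriv (deriv f) (T (n+1) t y)| * |deriv (fun y' => T (n+1) t y') y|) := by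
              rw [abs_mul, abs_mul]; norm_num
          _ ≤ 2 * ((g*δ/(100*((q:ℝ)+1))) * |deriv (fun y' => T (n+1) t y') y|) := by
              have h2 := mul_le_mul_of_nonneg_right h1
                (abs_nonneg (deriv (fun y' => T (n+1) t y') y))
              linarith only [h2]
          _ = 2*(g*δ/(100*((q:ℝ)+1)))/g * |g * deriv (fun y' => T (n+1) t y') y| := by
              rw [abs_mul, abs_of_pos hg]; field_simp)
      (by
        intro n hn
        show |deriv (fun y' =>
            (f (T (n+1) t y') - f (T n t y')) / (T (n+1) t y' - T n t y')) y| * G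
          ≤ (2*C/g) * (|g * deriv (fun y' => T n t y') y|
            + |g * deriv (fun y' => T (n+1) t y') y|)
        exact hdSb n hn)
      (by
        have hnn : (0:ℝ) ≤ (2*C/g)*(6*(q:ℝ)+9)/δ := by positivity
        rw [hG_def]
        ring_nf
        ring_nf at hnn
        linarith only [hnn])
      (by
        have h1 : (0:ℝ) ≤ δ*(16*C/g) := by positivity
        calc (2*C/g)*(6*(q:ℝ)+9) = δ*((2*C/g)*(6*(q:ℝ)+9)/δ) := by field_simp
          _ ≤ δ*G := by rw [hG_def]; nlinarith only [h1, hδ])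
      (by
        have heq : (2*(g*δ/(100*((q:ℝ)+1)))/g)*(4*(q:ℝ)+8)
            = δ*(8*(q:ℝ)+16)/(100*((q:ℝ)+1)) := by field_simp; ring
        rw [heq, div_le_iff₀ (by positivity)]
        have h1 : (0:ℝ) ≤ δ*(q:ℝ) := by positivity
        nlinarith only [h1, hδ.le, hq1])
      (by
        rw [hδ_def, mul_one_div, div_le_one (by positivity)]
        nlinarith only [hqR0.le, sq_nonneg ((q:ℝ))])
      (by
        rw [hδ_def, mul_one_div, div_le_one (by positivity)]
        nlinarith only [hqR0.le, sq_nonneg ((q:ℝ))])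
  obtain ⟨haq, -⟩ := hcore q le_rfl
  have haq' : |g * deriv (fun y' => T q t y') y - 2*(q:ℝ)|
      ≤ (q:ℝ)*((6*(q:ℝ)+2)*δ) := haq
  have hq2 : (0:ℝ) < 2*(q:ℝ) := by linarith
  have hlt : (6*(q:ℝ)+2)*δ < 1 := by
    rw [hδ_def, mul_one_div, div_lt_one (by positivity)]
    nlinarith only [hqR0, sq_nonneg ((q:ℝ))]
  have h2 : (q:ℝ)*((6*(q:ℝ)+2)*δ) < (q:ℝ)*1 := mul_lt_mul_of_pos_left hlt hqR0
  refine ⟨g * deriv (fun y' => T q t y') y / (2*(q:ℝ)) - 1, ?_, ?_, ?_⟩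
  · field_simp
    ring
  · have h1 : g * deriv (fun y' => T q t y') y / (2*(q:ℝ)) - 1
        = (g * deriv (fun y' => T q t y') y - 2*(q:ℝ))/(2*(q:ℝ)) := by
      field_simp
    rw [h1, abs_div, abs_of_pos hq2, div_lt_iff₀ hq2]
    linarith only [haq', h2]
  · rw [gt_iff_lt, div_lt_iff₀ hg]
    have h3 := (abs_le.1 haq').1
    linarith only [h3, h2]
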